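/- Let X = ⊔G_n be a space of graphs and (π_n : G̃_n → G_n) an asymptotically faithful covering sequence such that the family {G̃_n} has the uniform operator norm localization property with constant c ∈ (0,1]. If T is a locally compact bounded operator on ℓ²(X,H₀) of propagation at most R which is a ghost, then ‖T̃⁽ⁿ⁾‖ → 0 as n → ∞, where T̃⁽ⁿ⁾ denotes the lift at scale R of T⁽ⁿ⁾ to ℓ²(G̃_n,H₀) (defined and bounded for all sufficiently large n). -/

import Mathlib

noncomputable section

open scoped ENNReal

/-- ℓ²(Y, H): the Hilbert space of square-summable `H`-valued families indexed by `Y`. -/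
abbrev L2 (Y : Type*) (H : Type*) [NormedAddCommGroup H] [InnerProductSpace ℂ H] : Type _ :=
  lp (fun _ : Y => H) 2

namespace Roe

variable {Y H : Type*} [NormedAddCommGroup H] [InnerProductSpace ℂ H]

set_option maxHeartbeats 1000000 in
/-- The matrix entry `T_{x,y}` of a bounded operator `T` on `ℓ²(Y,H)`: the continuous linear
map on `H` determined by `T_{x,y} v = (T (δ_y ⊗ v)) x`. -/
def entry (T : L2 Y H →L[ℂ] L2 Y H) (x y : Y) : H →L[ℂ] H :=
  letI := Classical.decEq Y
  LinearMap.mkContinuous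
    { toFun := fun v => T (lp.single 2 y v) x
      map_add' := by
        intro v w
        show (T (lp.single 2 y (v + w))) x = (T (lp.single 2 y v)) x + (T (lp.single 2 y w)) x
        have h : lp.single (E := fun _ : Y => H) 2 y (v + w)
            = lp.single 2 y v + lp.single 2 y w := by
          apply lp.ext
          funext j
          by_cases hj : j = y
          · subst hj
            simp only [lp.single_apply_self, lp.coeFn_add, Pi.add_apply]
          · simp only [lp.single_apply_ne _ _ _ hj, lp.coeFn_add, Pi.add_apply, add_zero]
        rw [h, map_add]
        simp only [lp.coeFn_add, Pi.add_apply]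
      map_smul' := by
        intro c v
        show (T (lp.single 2 y (c • v))) x = c • (T (lp.single 2 y v)) x
        rw [lp.single_smul, map_smul]
        simp only [lp.coeFn_smul, Pi.smul_apply] }
    ‖T‖
    (by
      intro v
      show ‖(T (lp.single 2 y v)) x‖ ≤ ‖T‖ * ‖v‖
      have h1 : ‖(T (lp.single 2 y v)) x‖ ≤ ‖T (lp.single 2 y v)‖ :=
        lp.norm_apply_le_norm (by norm_num) _ _
      have h2 : ‖T (lp.single 2 y v)‖ ≤ ‖T‖ * ‖lp.single (E := fun _ : Y => H) 2 y v‖ :=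
        T.le_opNorm _
      have h3 : ‖lp.single (E := fun _ : Y => H) 2 y v‖ = ‖v‖ := by
        simpa using lp.norm_single (E := fun _ : Y => H) (p := 2) (by norm_num) (fun _ => v) y
      calc ‖(T (lp.single 2 y v)) x‖ ≤ ‖T‖ * ‖lp.single (E := fun _ : Y => H) 2 y v‖ :=
            le_trans h1 h2
        _ = ‖T‖ * ‖v‖ := by rw [h3])

/-- `T` has propagation at most `R` with respect to the distance function `d`. -/
def PropagationLE (d : Y → Y → ℝ) (T : L2 Y H →L[ℂ] L2 Y H) (R : ℝ) : Prop :=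
  ∀ x y : Y, R < d x y → entry T x y = 0

/-- A set is bounded with respect to the distance function `d`. -/
def DBounded (d : Y → Y → ℝ) (B : Set Y) : Prop :=
  ∃ C : ℝ, ∀ x ∈ B, ∀ y ∈ B, d x y ≤ C

/-- `T` is locally compact with respect to the distance function `d`: all matrix entries are
compact operators, and over every bounded set only finitely many matrix entries are nonzero. -/
def LocallyCompact (d : Y → Y → ℝ) (T : L2 Y H →L[ℂ] L2 Y H) : Prop :=
  (∀ x y : Y, IsCompactOperator (entry T x y)) ∧
    ∀ B : Set Y, DBounded d B →
      {p : Y × Y | p.1 ∈ B ∧ p.2 ∈ B ∧ entry T p.1 p.2 ≠ 0}.Finite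

/-- Membership in the algebraic Roe algebra `ℂ[Y]`: locally compact and finite propagation. -/
def MemRoeAlgebraic (d : Y → Y → ℝ) (T : L2 Y H →L[ℂ] L2 Y H) : Prop :=
  LocallyCompact d T ∧ ∃ R : ℝ, PropagationLE d T R

/-- The Roe algebra `C*(Y)`: the operator-norm closure of `ℂ[Y]` in `B(ℓ²(Y,H))`. -/
def RoeAlgebra (d : Y → Y → ℝ) : Set (L2 Y H →L[ℂ] L2 Y H) :=
  closure {T | MemRoeAlgebraic d T}

/-- `T` is a ghost operator with respect to the distance function `d`. -/
def IsGhost (d : Y → Y → ℝ) (T : L2 Y H →L[ℂ] L2 Y H) : Prop :=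
  ∀ R : ℝ, 0 < R → ∀ ε : ℝ, 0 < ε → ∃ B : Set Y, DBounded d B ∧
    ∀ ξ : L2 Y H, ‖ξ‖ = 1 →
      (∃ x : Y, x ∉ B ∧ ∀ z : Y, ξ z ≠ 0 → d x z < R) → ‖T ξ‖ < ε

/-- The support of `ξ ∈ ℓ²(Y,H)` has diameter at most `S` for the distance function `d`. -/
def SupportDiamLE (d : Y → Y → ℝ) (ξ : L2 Y H) (S : ℝ) : Prop :=
  ∀ z w : Y, ξ z ≠ 0 → ξ w ≠ 0 → d z w ≤ S

end Roe

/-- `π : X' → X` is a `K`-metric cover: it is surjective, and for every `u` the restriction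
of `π` to the open ball of radius `K` about `u` is a distance-preserving bijection onto the
open ball of radius `K` about `π u`. -/
def IsMetricCover {X' X : Type*} (d' : X' → X' → ℝ) (d : X → X → ℝ)
    (π : X' → X) (K : ℝ) : Prop :=
  Function.Surjective π ∧
    ∀ u : X', Set.BijOn π {w | d' u w < K} {x | d (π u) x < K} ∧
      ∀ w w' : X', d' u w < K → d' u w' < K → d (π w) (π w') = d' w w'

/-- `T'` is the lift of `T` at scale `R` along `π`: its matrix entries are
`T'_{u,v} = T_{π u, π v}` when `d'(u,v) ≤ R` and `0` otherwise. -/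
def IsLift {X' X H : Type*} [NormedAddCommGroup H] [InnerProductSpace ℂ H]
    (π : X' → X) (d' : X' → X' → ℝ)
    (T : L2 X H →L[ℂ] L2 X H) (R : ℝ) (T' : L2 X' H →L[ℂ] L2 X' H) : Prop :=
  ∀ u v : X', (d' u v ≤ R → Roe.entry T' u v = Roe.entry T (π u) (π v)) ∧
    (R < d' u v → Roe.entry T' u v = 0)

/-- `T'` is the lift at scale `S` along `π` of the `n`-th diagonal block `T⁽ⁿ⁾ = PₙTPₙ` of a
bounded operator `T` on `ℓ²(⊔ₙ Vₙ, H)`. -/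
def IsBlockLift {V : ℕ → Type*} {W H : Type*} [NormedAddCommGroup H] [InnerProductSpace ℂ H]
    {n : ℕ} (π : W → V n) (d' : W → W → ℝ)
    (T : L2 (Σ k, V k) H →L[ℂ] L2 (Σ k, V k) H) (S : ℝ)
    (T' : L2 W H →L[ℂ] L2 W H) : Prop :=
  ∀ u v : W, (d' u v ≤ S → Roe.entry T' u v = Roe.entry T ⟨n, π u⟩ ⟨n, π v⟩) ∧
    (S < d' u v → Roe.entry T' u v = 0)

/-- The graph metric of a simple graph, as a real-valued distance function
(shortest path length). -/
def gdist {V : Type*} (G : SimpleGraph V) (u v : V) : ℝ := G.dist u v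

/-!
Lifts exist as soon as `πₙ` is injective on balls of radius `> R`: the lift is the finite sum,
over pairs `(x, y)` of vertices of `Gₙ`, of the partial translations `u ↦ v`
(`πₙ u = x`, `πₙ v = y`, `d(u, v) ≤ R`) with coefficient `T_{x,y}`, each of norm `≤ ‖T_{x,y}‖`.

For the norm estimate, operator norm localization gives a unit vector `ξ` on `G̃ₙ`, supported in
an `S`-ball, with `c ‖T̃⁽ⁿ⁾‖ ≤ ‖T̃⁽ⁿ⁾ ξ‖`. Once `πₙ` is an isometry on balls of radius
`S + R + 1`, pushing `ξ` forward gives a unit vector `η` on `X`, supported in an `S`-ball of `Gₙ`,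
with `‖T̃⁽ⁿ⁾ ξ‖ ≤ ‖T η‖`. For large `n` that ball avoids any given bounded set, so the ghost
property makes `‖T η‖ < c ε`.
-/

namespace L2

variable {X' X H : Type*} [NormedAddCommGroup H] [InnerProductSpace ℂ H]

theorem norm_sq_eq_sum (f : L2 X H) (F : Finset X) (hF : ∀ x, f x ≠ 0 → x ∈ F) :
    ‖f‖ ^ 2 = ∑ x ∈ F, ‖f x‖ ^ 2 := by
  have hsum := lp.hasSum_norm (by norm_num) f
  simp only [ENNReal.toReal_ofNat, Real.rpow_two] at hsum
  refine hsum.unique (hasSum_sum_of_ne_finset_zero fun x hx => ?_)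
  simp [not_imp_comm.mp (hF x) hx]

theorem sum_norm_sq_le (f : L2 X H) (s : Finset X) : ∑ x ∈ s, ‖f x‖ ^ 2 ≤ ‖f‖ ^ 2 := by
  simpa only [ENNReal.toReal_ofNat, Real.rpow_two] using lp.sum_rpow_le_norm_rpow (by norm_num) f s

theorem norm_le_of_forall_sum_le {f : L2 X H} {C : ℝ} (hC : 0 ≤ C)
    (hf : ∀ s : Finset X, ∑ x ∈ s, ‖f x‖ ^ 2 ≤ C ^ 2) : ‖f‖ ≤ C :=
  lp.norm_le_of_forall_sum_le (by norm_num) hC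
    (by simpa only [ENNReal.toReal_ofNat, Real.rpow_two] using hf)

omit [InnerProductSpace ℂ H] in
theorem memℓp_of_forall_sum_le {f : X → H} {C : ℝ}
    (hf : ∀ s : Finset X, ∑ x ∈ s, ‖f x‖ ^ 2 ≤ C) : Memℓp f 2 :=
  memℓp_gen' (by simpa only [ENNReal.toReal_ofNat, Real.rpow_two] using hf)

theorem eq_sum_single [DecidableEq X] (f : L2 X H) (F : Finset X) (hF : ∀ x, f x ≠ 0 → x ∈ F) :
    f = ∑ x ∈ F, lp.single 2 x (f x) := by
  ext x
  simp only [lp.coeFn_sum, Finset.sum_apply, lp.coeFn_single, Finset.sum_pi_single]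
  split_ifs with hx
  · rfl
  · exact not_imp_comm.mp (hF x) hx

def pushforward [DecidableEq X] (π : X' → X) (F : Finset X') (ξ : L2 X' H) : L2 X H :=
  ∑ v ∈ F, lp.single 2 (π v) (ξ v)

variable [DecidableEq X] {π : X' → X} {F : Finset X'} {ξ : L2 X' H}

theorem pushforward_apply_of_mem (hπ : Set.InjOn π F) {v : X'} (hv : v ∈ F) :
    pushforward π F ξ (π v) = ξ v := by
  rw [pushforward, lp.coeFn_sum, Finset.sum_apply, Finset.sum_eq_single_of_mem v hv]
  · simp
  · intro w hw hwv
    simp [Pi.single_eq_of_ne (fun h => hwv (hπ hw hv h.symm))]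

theorem mem_image_of_pushforward_apply_ne_zero {x : X} (hx : pushforward π F ξ x ≠ 0) :
    x ∈ F.image π := by
  contrapose! hx
  rw [pushforward, lp.coeFn_sum, Finset.sum_apply]
  refine Finset.sum_eq_zero fun v hv => ?_
  have hxv : x ≠ π v := fun h => hx (h ▸ Finset.mem_image_of_mem π hv)
  simp [Pi.single_eq_of_ne hxv]

theorem norm_pushforward (hπ : Set.InjOn π F) (hF : ∀ v, ξ v ≠ 0 → v ∈ F) :
    ‖pushforward π F ξ‖ = ‖ξ‖ := by
  have h := norm_sq_eq_sum (pushforward π F ξ) (F.image π)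
    fun _ => mem_image_of_pushforward_apply_ne_zero
  rw [Finset.sum_image hπ, Finset.sum_congr rfl fun v hv => by
    rw [pushforward_apply_of_mem hπ hv], ← norm_sq_eq_sum ξ F hF] at h
  exact (pow_left_inj₀ (norm_nonneg _) (norm_nonneg _) two_ne_zero).mp h

end L2

namespace Roe

variable {Y H : Type*} [NormedAddCommGroup H] [InnerProductSpace ℂ H]

theorem entry_apply [DecidableEq Y] (T : L2 Y H →L[ℂ] L2 Y H) (x y : Y) (v : H) :
    entry T x y v = T (lp.single 2 y v) x := by
  show T (@lp.single Y (fun _ => H) _ (Classical.decEq Y) 2 y v) x = _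
  rw [Subsingleton.elim (Classical.decEq Y) ‹_›]

theorem entry_sum {ι : Type*} (s : Finset ι) (A : ι → L2 Y H →L[ℂ] L2 Y H) (x y : Y) :
    entry (∑ i ∈ s, A i) x y = ∑ i ∈ s, entry (A i) x y := by
  classical
  ext v
  simp only [entry_apply, sum_apply, lp.coeFn_sum, Finset.sum_apply]

theorem apply_eq_sum_entry (T : L2 Y H →L[ℂ] L2 Y H) (f : L2 Y H) (F : Finset Y)
    (hF : ∀ y, f y ≠ 0 → y ∈ F) (x : Y) : T f x = ∑ y ∈ F, entry T x y (f y) := by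
  classical
  conv_lhs => rw [L2.eq_sum_single f F hF]
  simp only [map_sum, lp.coeFn_sum, Finset.sum_apply, entry_apply]

theorem PropagationLE.mono {d : Y → Y → ℝ} {T : L2 Y H →L[ℂ] L2 Y H} {R R' : ℝ}
    (hT : PropagationLE d T R) (hRR' : R ≤ R') : PropagationLE d T R' :=
  fun x y hxy => hT x y (hRR'.trans_lt hxy)

open Classical in
def partialTranslationFun (r : Y → Y → Prop) (b : H →L[ℂ] H) (ξ : Y → H) (u : Y) : H :=
  if h : ∃ v, r u v then b (ξ h.choose) else 0

theorem sum_norm_sq_partialTranslationFun_le {r : Y → Y → Prop} (hr : Relator.LeftUnique r)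
    (b : H →L[ℂ] H) (ξ : L2 Y H) (s : Finset Y) :
    ∑ u ∈ s, ‖partialTranslationFun r b ξ u‖ ^ 2 ≤ (‖b‖ * ‖ξ‖) ^ 2 := by
  classical
  set s' := s.filter fun u => ∃ v, r u v
  set g : Y → Y := fun u => if h : ∃ v, r u v then h.choose else u
  have hg : ∀ u ∈ s', r u (g u) := fun u hu => by
    have h := (Finset.mem_filter.mp hu).2
    simpa only [g, dif_pos h] using h.choose_spec
  have hg_inj : Set.InjOn g s' := fun u hu u' hu' h => hr (hg u hu) (h ▸ hg u' hu')
  calc ∑ u ∈ s, ‖partialTranslationFun r b ξ u‖ ^ 2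
      = ∑ u ∈ s', ‖b (ξ (g u))‖ ^ 2 := by
        rw [Finset.sum_filter]
        refine Finset.sum_congr rfl fun u _ => ?_
        by_cases h : ∃ v, r u v <;> simp [partialTranslationFun, g, h]
    _ ≤ ∑ u ∈ s', ‖b‖ ^ 2 * ‖ξ (g u)‖ ^ 2 := by
        gcongr with u
        rw [← mul_pow]
        exact pow_le_pow_left₀ (norm_nonneg _) (b.le_opNorm _) 2
    _ = ‖b‖ ^ 2 * ∑ v ∈ s'.image g, ‖ξ v‖ ^ 2 := by rw [Finset.sum_image hg_inj, Finset.mul_sum]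
    _ ≤ (‖b‖ * ‖ξ‖) ^ 2 := by
        rw [mul_pow]
        gcongr
        exact L2.sum_norm_sq_le ξ _

def partialTranslation {r : Y → Y → Prop} (hr : Relator.LeftUnique r) (b : H →L[ℂ] H) :
    L2 Y H →L[ℂ] L2 Y H :=
  LinearMap.mkContinuous
    { toFun := fun ξ => ⟨partialTranslationFun r b ξ,
        L2.memℓp_of_forall_sum_le (sum_norm_sq_partialTranslationFun_le hr b ξ)⟩
      map_add' := fun ξ η => by
        ext u
        show partialTranslationFun r b ⇑(ξ + η) u =
          partialTranslationFun r b ξ u + partialTranslationFun r b η u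
        by_cases h : ∃ v, r u v <;> simp [partialTranslationFun, h]
      map_smul' := fun a ξ => by
        ext u
        by_cases h : ∃ v, r u v <;> simp [partialTranslationFun, h] }
    ‖b‖
    fun ξ => L2.norm_le_of_forall_sum_le (by positivity)
      (sum_norm_sq_partialTranslationFun_le hr b ξ)

open Classical in
theorem entry_partialTranslation {r : Y → Y → Prop} (hr : Relator.BiUnique r)
    (b : H →L[ℂ] H) (u v : Y) :
    entry (partialTranslation hr.1 b) u v = if r u v then b else 0 := by
  ext w
  rw [entry_apply]
  show partialTranslationFun r b _ u = _
  by_cases huv : r u v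
  · have hex : ∃ v, r u v := ⟨v, huv⟩
    simp [partialTranslationFun, hex, hr.2 hex.choose_spec huv, huv]
  · by_cases hex : ∃ v, r u v
    · have hne : hex.choose ≠ v := fun h => huv (h ▸ hex.choose_spec)
      simp [partialTranslationFun, hex, huv, Pi.single_eq_of_ne hne]
    · simp [partialTranslationFun, hex, huv]

end Roe

section Graph

variable {V : Type*} {G : SimpleGraph V}

theorem gdist_comm (G : SimpleGraph V) (u v : V) : gdist G u v = gdist G v u := by
  rw [gdist, gdist, SimpleGraph.dist_comm]

theorem gdist_triangle (hc : G.Connected) (u v w : V) :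
    gdist G u w ≤ gdist G u v + gdist G v w := by
  simp only [gdist]
  exact_mod_cast hc.dist_triangle

theorem gdist_eq_zero_iff (hc : G.Connected) {u v : V} : gdist G u v = 0 ↔ u = v := by
  rw [gdist, Nat.cast_eq_zero, hc.dist_eq_zero_iff]

theorem finite_setOf_gdist_le (hc : G.Connected) (hfin : ∀ v, (G.neighborSet v).Finite)
    (u : V) (r : ℝ) : {v | gdist G u v ≤ r}.Finite := by
  have hwalk : ∀ k : ℕ, {v | ∃ p : G.Walk v u, p.length ≤ k}.Finite := by
    intro k
    induction k with
    | zero =>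
      refine (Set.finite_singleton u).subset fun v ⟨p, hp⟩ => ?_
      exact SimpleGraph.Walk.eq_of_length_eq_zero (Nat.le_zero.mp hp)
    | succ k ih =>
      refine ((Set.finite_singleton u).union (ih.biUnion fun x _ => hfin x)).subset ?_
      rintro v ⟨_ | ⟨hvx, q⟩, hp⟩
      · exact Or.inl rfl
      · refine Or.inr (Set.mem_biUnion ⟨q, ?_⟩ hvx.symm)
        simpa using hp
  obtain ⟨k, hk⟩ := exists_nat_ge r
  refine (hwalk k).subset fun v hv => ?_
  obtain ⟨p, hp⟩ := (hc v u).exists_walk_length_eq_dist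
  refine ⟨p, ?_⟩
  have : (G.dist u v : ℝ) ≤ k := le_trans hv hk
  rw [hp, SimpleGraph.dist_comm]
  exact_mod_cast this

theorem finite_of_dBounded_gdist (hc : G.Connected) (hfin : ∀ v, (G.neighborSet v).Finite)
    {B : Set V} (hB : Roe.DBounded (gdist G) B) : B.Finite := by
  obtain ⟨C, hC⟩ := hB
  rcases B.eq_empty_or_nonempty with rfl | ⟨u, hu⟩
  · exact Set.finite_empty
  · exact (finite_setOf_gdist_le hc hfin u C).subset fun v hv => hC u hu v hv

end Graph

namespace IsMetricCover

variable {X' X : Type*} {d' : X' → X' → ℝ} {d : X → X → ℝ} {π : X' → X} {K : ℝ}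

theorem injOn (h : IsMetricCover d' d π K) (u : X') : Set.InjOn π {w | d' u w < K} :=
  (h.2 u).1.injOn

theorem finite_ball [Finite X] (h : IsMetricCover d' d π K) (u : X') :
    {w | d' u w < K}.Finite :=
  Set.Finite.of_finite_image (Set.toFinite _) (h.injOn u)

theorem finite_neighborSet [Finite X] {G' : SimpleGraph X'}
    (h : IsMetricCover (gdist G') d π K) (hK : 1 < K) (w : X') : (G'.neighborSet w).Finite :=
  (h.finite_ball w).subset fun v hv => by
    simpa [gdist, SimpleGraph.dist_eq_one_iff_adj.mpr hv] using hK

end IsMetricCover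

open Roe in
theorem exists_isLift {X' X H : Type*} [NormedAddCommGroup H] [InnerProductSpace ℂ H]
    (π : X' → X) (hπ : (Set.range π).Finite) (d' : X' → X' → ℝ)
    (hd' : ∀ u v, d' u v = d' v u) (R : ℝ) (hinj : ∀ u, Set.InjOn π {w | d' u w ≤ R})
    (T : L2 X H →L[ℂ] L2 X H) : ∃ T', IsLift π d' T R T' := by
  classical
  let r : X × X → X' → X' → Prop := fun p u v => π u = p.1 ∧ π v = p.2 ∧ d' u v ≤ R
  have hr : ∀ p, Relator.BiUnique (r p) := fun p =>
    ⟨fun u u' v ⟨hu, _, huv⟩ ⟨hu', _, hu'v⟩ =>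
      hinj v ((hd' _ _).trans_le huv) ((hd' _ _).trans_le hu'v) (hu.trans hu'.symm),
     fun u v v' ⟨_, hv, huv⟩ ⟨_, hv', huv'⟩ => hinj u huv huv' (hv.trans hv'.symm)⟩
  let P := hπ.toFinset ×ˢ hπ.toFinset
  refine ⟨∑ p ∈ P, partialTranslation (hr p).1 (entry T p.1 p.2),
    fun u v => ⟨fun h => ?_, fun h => ?_⟩⟩
  · have hmem : (π u, π v) ∈ P := by simp [P]
    rw [entry_sum, Finset.sum_eq_single_of_mem _ hmem, entry_partialTranslation (hr _),
      if_pos ⟨rfl, rfl, h⟩]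
    intro p _ hp
    rw [entry_partialTranslation (hr _), if_neg]
    rintro ⟨hu, hv, -⟩
    exact hp (Prod.ext hu.symm hv.symm)
  · rw [entry_sum]
    refine Finset.sum_eq_zero fun p _ => ?_
    rw [entry_partialTranslation (hr _), if_neg]
    rintro ⟨-, -, h'⟩
    exact not_le.mpr h h'

theorem isBlockLift_iff_isLift {V : ℕ → Type*} {W H : Type*} [NormedAddCommGroup H]
    [InnerProductSpace ℂ H] {n : ℕ} {π : W → V n} {d' : W → W → ℝ}
    {T : L2 (Σ k, V k) H →L[ℂ] L2 (Σ k, V k) H} {S : ℝ} {T' : L2 W H →L[ℂ] L2 W H} :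
    IsBlockLift π d' T S T' ↔ IsLift (fun w => (⟨n, π w⟩ : Σ k, V k)) d' T S T' :=
  Iff.rfl

theorem IsMetricCover.exists_isBlockLift {V : ℕ → Type*} {W H : Type*} [NormedAddCommGroup H]
    [InnerProductSpace ℂ H] {n : ℕ} [Finite (V n)] {G' : SimpleGraph W} {d : V n → V n → ℝ}
    {π : W → V n} {K R : ℝ} (hcov : IsMetricCover (gdist G') d π K) (hRK : R < K)
    (T : L2 (Σ k, V k) H →L[ℂ] L2 (Σ k, V k) H) : ∃ T', IsBlockLift π (gdist G') T R T' :=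
  exists_isLift _ ((Set.finite_range (Sigma.mk n)).subset (Set.range_comp_subset_range π _)) _
    (gdist_comm _) R (fun u => (sigma_mk_injective.comp_injOn (hcov.injOn u)).mono
      (Set.ofPred_subset_ofPred.mpr fun _ hw => hw.trans_lt hRK)) T

namespace IsLift

open Roe

variable {X' X H : Type*} [NormedAddCommGroup H] [InnerProductSpace ℂ H] {π : X' → X}
  {d' : X' → X' → ℝ} {T : L2 X H →L[ℂ] L2 X H} {R : ℝ} {T' : L2 X' H →L[ℂ] L2 X' H}

theorem propagationLE (hlift : IsLift π d' T R T') : PropagationLE d' T' R :=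
  fun u v h => (hlift u v).2 h

theorem locallyCompact (hlift : IsLift π d' T R T') (hT : ∀ x y, IsCompactOperator (entry T x y))
    (hfin : ∀ B, DBounded d' B → B.Finite) : LocallyCompact d' T' := by
  refine ⟨fun u v => ?_, fun B hB =>
    ((hfin B hB).prod (hfin B hB)).subset fun p hp => ⟨hp.1, hp.2.1⟩⟩
  by_cases h : d' u v ≤ R
  · rw [(hlift u v).1 h]
    exact hT _ _
  · rw [(hlift u v).2 (not_le.mp h)]
    exact isCompactOperator_zero

theorem norm_apply_le_norm_apply_pushforward [DecidableEq X] {d : X → X → ℝ}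
    (hT : PropagationLE d T R) (hlift : IsLift π d' T R T') {U : Set X'} (hinj : Set.InjOn π U)
    (hiso : ∀ w ∈ U, ∀ w' ∈ U, d (π w) (π w') = d' w w') {ξ : L2 X' H} {F : Finset X'}
    (hF : ∀ v, ξ v ≠ 0 → v ∈ F) (hFU : ↑F ⊆ U) (hnbhd : ∀ u, ∀ v ∈ F, d' u v ≤ R → u ∈ U) :
    ‖T' ξ‖ ≤ ‖T (L2.pushforward π F ξ)‖ := by
  classical
  set η := L2.pushforward π F ξ
  have hinjF : Set.InjOn π F := hinj.mono hFU
  have hagree : ∀ u ∈ U, T' ξ u = T η (π u) := by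
    intro u hu
    rw [apply_eq_sum_entry T' ξ F hF, apply_eq_sum_entry T η (F.image π)
      (fun _ => L2.mem_image_of_pushforward_apply_ne_zero), Finset.sum_image hinjF]
    refine Finset.sum_congr rfl fun v hv => ?_
    rw [L2.pushforward_apply_of_mem hinjF hv]
    by_cases h : d' u v ≤ R
    · rw [(hlift u v).1 h]
    · have hfar : R < d (π u) (π v) := by
        rw [hiso u hu v (hFU hv)]
        exact not_le.mp h
      rw [(hlift u v).2 (not_le.mp h), hT _ _ hfar]
  have hvanish : ∀ u ∉ U, T' ξ u = 0 := by
    intro u hu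
    rw [apply_eq_sum_entry T' ξ F hF]
    refine Finset.sum_eq_zero fun v hv => ?_
    rw [(hlift u v).2 (not_le.mp fun h => hu (hnbhd u v hv h))]
    rfl
  refine L2.norm_le_of_forall_sum_le (norm_nonneg _) fun s => ?_
  calc ∑ u ∈ s, ‖T' ξ u‖ ^ 2 = ∑ u ∈ s.filter (· ∈ U), ‖T η (π u)‖ ^ 2 := by
        rw [Finset.sum_filter]
        refine Finset.sum_congr rfl fun u _ => ?_
        split_ifs with hu
        · rw [hagree u hu]
        · simp [hvanish u hu]
    _ = ∑ x ∈ (s.filter (· ∈ U)).image π, ‖T η x‖ ^ 2 := by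
        rw [Finset.sum_image (hinj.mono fun u hu => (Finset.mem_filter.mp hu).2)]
    _ ≤ ‖T η‖ ^ 2 := L2.sum_norm_sq_le _ _

theorem exists_norm_apply_le_norm_apply [PseudoMetricSpace X] {G' : SimpleGraph X'}
    (hc : G'.Connected) {u₀ : X'} {K : ℝ}
    (hiso : ∀ w w', gdist G' u₀ w < K → gdist G' u₀ w' < K → dist (π w) (π w') = gdist G' w w')
    (hfin : {w | gdist G' u₀ w < K}.Finite) (hT : PropagationLE (fun x y => dist x y) T R)
    (hlift : IsLift π (gdist G') T R T') {ξ : L2 X' H} {S : ℝ}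
    (hξ : ∀ v, ξ v ≠ 0 → gdist G' u₀ v ≤ S) (hSK : S < K) (hSRK : S + R < K) :
    ∃ η : L2 X H, ‖η‖ = ‖ξ‖ ∧ (∀ x, η x ≠ 0 → dist (π u₀) x ≤ S) ∧ ‖T' ξ‖ ≤ ‖T η‖ := by
  classical
  set U := {w | gdist G' u₀ w < K}
  have hsupp : {v | ξ v ≠ 0} ⊆ U := fun v hv => (hξ v hv).trans_lt hSK
  set F := (hfin.subset hsupp).toFinset
  have hF : ∀ v, ξ v ≠ 0 → v ∈ F := fun v hv => (hfin.subset hsupp).mem_toFinset.mpr hv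
  have hFS : ∀ v ∈ F, gdist G' u₀ v ≤ S := fun v hv => hξ v ((Set.Finite.mem_toFinset _).mp hv)
  have hFU : ↑F ⊆ U := fun v hv => (hFS v hv).trans_lt hSK
  have hinj : Set.InjOn π U := fun w hw w' hw' h =>
    (gdist_eq_zero_iff hc).mp (by rw [← hiso w w' hw hw', h, dist_self])
  have hnbhd : ∀ u, ∀ v ∈ F, gdist G' u v ≤ R → u ∈ U := fun u v hv huv =>
    calc gdist G' u₀ u ≤ gdist G' u₀ v + gdist G' v u := gdist_triangle hc _ _ _
      _ ≤ S + R := add_le_add (hFS v hv) (by rwa [gdist_comm])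
      _ < K := hSRK
  refine ⟨L2.pushforward π F ξ, L2.norm_pushforward (hinj.mono hFU) hF, fun x hx => ?_,
    hlift.norm_apply_le_norm_apply_pushforward hT hinj (fun w hw w' hw' => hiso w w' hw hw') hF
      hFU hnbhd⟩
  obtain ⟨v, hv, rfl⟩ := Finset.mem_image.mp (L2.mem_image_of_pushforward_apply_ne_zero hx)
  have hu₀ : u₀ ∈ U := show gdist G' u₀ u₀ < K by
    rw [(gdist_eq_zero_iff hc).mpr rfl]
    exact (Nat.cast_nonneg _).trans_lt (hFU hv)
  rw [hiso u₀ v hu₀ (hFU hv)]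
  exact hFS v hv

end IsLift

theorem exists_forall_fst_le_of_dBounded {V : ℕ → Type*} [PseudoMetricSpace (Σ k, V k)]
    (hsep : ∀ C : ℝ, ∃ N : ℕ, ∀ m n : ℕ, m ≠ n → N ≤ m + n →
      ∀ (u : V m) (v : V n), C ≤ dist (⟨m, u⟩ : Σ k, V k) ⟨n, v⟩)
    {B : Set (Σ k, V k)} (hB : Roe.DBounded (fun x y => dist x y) B) :
    ∃ M : ℕ, ∀ z ∈ B, z.1 ≤ M := by
  obtain ⟨C, hC⟩ := hB
  rcases B.eq_empty_or_nonempty with rfl | ⟨z₀, hz₀⟩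
  · exact ⟨0, by simp⟩
  obtain ⟨N, hN⟩ := hsep (C + 1)
  refine ⟨max z₀.1 N, fun z hz => ?_⟩
  by_contra! hlt
  have hfar := hN z.1 z₀.1 (by omega) (by omega) z.2 z₀.2
  linarith [hC z hz z₀ hz₀]

theorem ghost_lift_norms_tend_to_zero_general
    (H₀ : Type) [NormedAddCommGroup H₀] [InnerProductSpace ℂ H₀]
    -- a space of graphs X = ⊔ₙ Gₙ
    (V : ℕ → Type) [∀ n, Fintype (V n)] (G : ∀ n, SimpleGraph (V n))
    [MetricSpace (Σ k, V k)]
    (hrestr : ∀ (n : ℕ) (u v : V n), dist (⟨n, u⟩ : Σ k, V k) ⟨n, v⟩ = gdist (G n) u v)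
    (hsep : ∀ C : ℝ, ∃ N : ℕ, ∀ m n : ℕ, m ≠ n → N ≤ m + n →
      ∀ (u : V m) (v : V n), C ≤ dist (⟨m, u⟩ : Σ k, V k) ⟨n, v⟩)
    -- a Galois covering sequence (G̃ₙ → Gₙ) with deck groups Γₙ
    (W : ℕ → Type) (G' : ∀ n, SimpleGraph (W n)) (hconn' : ∀ n, (G' n).Connected)
    (π : ∀ n, W n → V n)
    -- asymptotic faithfulness
    (hfaith : ∀ R : ℝ, 0 < R → ∃ N : ℕ, ∀ n : ℕ, N ≤ n →
      IsMetricCover (gdist (G' n)) (gdist (G n)) (π n) R)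
    -- uniform operator norm localization for the covers, with constant c
    (c : ℝ) (hc0 : 0 < c)
    (honl : ∀ R : ℝ, 0 < R → ∃ S : ℝ, 0 < S ∧
      ∀ (n : ℕ) (A : L2 (W n) H₀ →L[ℂ] L2 (W n) H₀),
        Roe.LocallyCompact (gdist (G' n)) A → Roe.PropagationLE (gdist (G' n)) A R →
        ∃ ξ : L2 (W n) H₀, ‖ξ‖ = 1 ∧ Roe.SupportDiamLE (gdist (G' n)) ξ S ∧
          c * ‖A‖ ≤ ‖A ξ‖) :
    ∀ (T : L2 (Σ k, V k) H₀ →L[ℂ] L2 (Σ k, V k) H₀) (R : ℝ),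
      Roe.LocallyCompact (fun x y : Σ k, V k => dist x y) T →
      Roe.PropagationLE (fun x y : Σ k, V k => dist x y) T R →
      Roe.IsGhost (fun x y : Σ k, V k => dist x y) T →
      (∃ N₀ : ℕ, ∀ n : ℕ, N₀ ≤ n →
        ∃ T' : L2 (W n) H₀ →L[ℂ] L2 (W n) H₀, IsBlockLift (π n) (gdist (G' n)) T R T') ∧
      ∀ ε : ℝ, 0 < ε → ∃ N : ℕ, ∀ n : ℕ, N ≤ n →
        ∀ T' : L2 (W n) H₀ →L[ℂ] L2 (W n) H₀,
          IsBlockLift (π n) (gdist (G' n)) T R T' → ‖T'‖ < ε := by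
  intro T R hlc hprop hghost
  set R' := max R 1
  have hR' : 0 < R' := lt_max_of_lt_right one_pos
  have hRR' : R ≤ R' := le_max_left R 1
  refine ⟨?_, fun ε hε => ?_⟩
  · obtain ⟨N, hN⟩ := hfaith (R' + 1) (by positivity)
    exact ⟨N, fun n hn => (hN n hn).exists_isBlockLift (by linarith) T⟩
  obtain ⟨S, hS, hlocalize⟩ := honl R' hR'
  obtain ⟨N, hN⟩ := hfaith (S + R' + 1) (by positivity)
  obtain ⟨B, hB, hBsmall⟩ := hghost (S + 1) (by linarith) (c * ε) (by positivity)
  obtain ⟨M, hM⟩ := exists_forall_fst_le_of_dBounded hsep hB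
  refine ⟨max N (M + 1), fun n hn T' hT' => ?_⟩
  have hcov := hN n (le_of_max_le_left hn)
  rw [isBlockLift_iff_isLift] at hT'
  obtain ⟨ξ, hξ, hξS, hcξ⟩ := hlocalize n T'
    (hT'.locallyCompact hlc.1 fun _ => finite_of_dBounded_gdist (hconn' n)
      (hcov.finite_neighborSet (by linarith)))
    (hT'.propagationLE.mono hRR')
  obtain ⟨u₀, hu₀⟩ : ∃ u₀, ξ u₀ ≠ 0 := by
    by_contra! h
    simp [show ξ = 0 from lp.ext (funext h)] at hξ
  obtain ⟨η, hη, hηS, hξη⟩ := hT'.exists_norm_apply_le_norm_apply (hconn' n)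
    (fun w w' hw hw' => (hrestr n _ _).trans ((hcov.2 u₀).2 w w' hw hw'))
    (hcov.finite_ball u₀) hprop (fun v hv => hξS u₀ v hu₀ hv) (by linarith) (by linarith)
  have hTη : ‖T η‖ < c * ε := hBsmall η (hη.trans hξ)
    ⟨⟨n, π n u₀⟩, fun h => by have : n ≤ M := hM _ h; omega,
      fun z hz => (hηS z hz).trans_lt (by linarith)⟩
  exact lt_of_mul_lt_mul_left (hcξ.trans_lt (hξη.trans_lt hTη)) hc0.le

/-- under asymptotic faithfulness and uniform operator norm localization of
the covers, if T is a locally compact ghost operator of propagation at most R, then its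
block lifts are defined for all large n and their norms tend to 0. -/
theorem ghost_lift_norms_tend_to_zero
    (H₀ : Type) [NormedAddCommGroup H₀] [InnerProductSpace ℂ H₀] [CompleteSpace H₀]
    [TopologicalSpace.SeparableSpace H₀] (hinf : ¬ FiniteDimensional ℂ H₀)
    -- a space of graphs X = ⊔ₙ Gₙ
    (V : ℕ → Type) [∀ n, Fintype (V n)] (G : ∀ n, SimpleGraph (V n))
    (hconn : ∀ n, (G n).Connected)
    [MetricSpace (Σ k, V k)]
    (hrestr : ∀ (n : ℕ) (u v : V n), dist (⟨n, u⟩ : Σ k, V k) ⟨n, v⟩ = gdist (G n) u v)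
    (hsep : ∀ C : ℝ, ∃ N : ℕ, ∀ m n : ℕ, m ≠ n → N ≤ m + n →
      ∀ (u : V m) (v : V n), C ≤ dist (⟨m, u⟩ : Σ k, V k) ⟨n, v⟩)
    -- a Galois covering sequence (G̃ₙ → Gₙ) with deck groups Γₙ
    (W : ℕ → Type) (G' : ∀ n, SimpleGraph (W n)) (hconn' : ∀ n, (G' n).Connected)
    (Γ : ℕ → Type) [∀ n, Group (Γ n)] [∀ n, MulAction (Γ n) (W n)]
    (hact : ∀ (n : ℕ) (γ : Γ n) (u v : W n), (G' n).Adj (γ • u) (γ • v) ↔ (G' n).Adj u v)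
    (hfree : ∀ (n : ℕ) (γ : Γ n) (u : W n), γ • u = u → γ = 1)
    (π : ∀ n, W n → V n) (hπ : ∀ n, Function.Surjective (π n))
    (hfib : ∀ (n : ℕ) (u v : W n), π n u = π n v ↔ ∃ γ : Γ n, γ • u = v)
    (hquot : ∀ (n : ℕ) (x y : V n),
      (G n).Adj x y ↔ ∃ u v : W n, π n u = x ∧ π n v = y ∧ (G' n).Adj u v)
    -- asymptotic faithfulness
    (hfaith : ∀ R : ℝ, 0 < R → ∃ N : ℕ, ∀ n : ℕ, N ≤ n →
      IsMetricCover (gdist (G' n)) (gdist (G n)) (π n) R)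
    -- uniform operator norm localization for the covers, with constant c
    (c : ℝ) (hc0 : 0 < c) (hc1 : c ≤ 1)
    (honl : ∀ R : ℝ, 0 < R → ∃ S : ℝ, 0 < S ∧
      ∀ (n : ℕ) (A : L2 (W n) H₀ →L[ℂ] L2 (W n) H₀),
        Roe.LocallyCompact (gdist (G' n)) A → Roe.PropagationLE (gdist (G' n)) A R →
        ∃ ξ : L2 (W n) H₀, ‖ξ‖ = 1 ∧ Roe.SupportDiamLE (gdist (G' n)) ξ S ∧
          c * ‖A‖ ≤ ‖A ξ‖) :
    ∀ (T : L2 (Σ k, V k) H₀ →L[ℂ] L2 (Σ k, V k) H₀) (R : ℝ),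
      Roe.LocallyCompact (fun x y : Σ k, V k => dist x y) T →
      Roe.PropagationLE (fun x y : Σ k, V k => dist x y) T R →
      Roe.IsGhost (fun x y : Σ k, V k => dist x y) T →
      (∃ N₀ : ℕ, ∀ n : ℕ, N₀ ≤ n →
        ∃ T' : L2 (W n) H₀ →L[ℂ] L2 (W n) H₀, IsBlockLift (π n) (gdist (G' n)) T R T') ∧
      ∀ ε : ℝ, 0 < ε → ∃ N : ℕ, ∀ n : ℕ, N ≤ n →
        ∀ T' : L2 (W n) H₀ →L[ℂ] L2 (W n) H₀,
          IsBlockLift (π n) (gdist (G' n)) T R T' → ‖T'‖ < ε :=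
  ghost_lift_norms_tend_to_zero_general H₀ V G hrestr hsep W G' hconn' π hfaith c hc0 honl

end
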